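/- arXiv:1710.02488 — 2 statements merged into one kernel-verified Lean document; each statement's English description precedes it below -/
import Mathlib

section
/- In the approximation setting, the following error bound holds (Proposition on the convergence of the nonintrusive approximation): (1/|P|) ∫_P ‖X^N_μ − L_μ‖_V² dμ ≤ 4 (1 + N² Z_N) θ² + (8/|P|) (sup_{μ∈P} ‖L_μ‖_V²) · N δ_N² / τ_N, where θ := inf_{φ ∈ S^{sN}} sup_{μ ∈ P} ‖L_μ − φ(μ)‖_V and S^{sN} is the linear span in C(P, V) of the range of J^N. -/
/-!
For `φ ∈ S^{sN}` the interpolation operator `J^N` fixes `φ`, because `G⁻¹` inverts the matrix of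
the functions `⟪g_·, Φ_n⟫` at the nodes. Hence
`X^N_μ − L_μ = (X^N_μ − J^N L(μ)) + J^N(L − φ)(μ) + (φ(μ) − L_μ)`.
The first term is `∑_n ⟪I^N g_μ − g_μ, Φ_n⟫ c_n` with `c_n = ∑_p (G⁻¹)_{np} L_{μ_p}`, so Bessel's
inequality for the orthonormal POD modes bounds it by `‖I^N g_μ − g_μ‖² ∑_n ‖c_n‖²`.
The POD eigen-relations give `G⁻¹ = diag((N τ_n)^{-1/2}) ξ`, whose rows have squared length
`1/(N τ_n)`; so `∑_n ‖c_n‖² ≤ N sup ‖L‖² / τ_N`, and a Cauchy–Schwarz inequality weighted by `τ_n`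
gives `‖J^N(L − φ)(μ)‖² ≤ N t² ∑_n ⟪g_μ, Φ_n⟫² / τ_n` whenever `‖L − φ‖ ≤ t` on `P`.
Integrating over `P` turns the last sum into `N² |P| Z_N t²`; then let `t` decrease to `θ`.
-/

open MeasureTheory Bornology
open scoped RealInnerProductSpace Matrix

section NormedSpace

variable {ι V : Type*} [SeminormedAddCommGroup V]

theorem norm_sub_sq_le_of_chain (a b c d : V) :
    ‖a - d‖ ^ 2 ≤ 2 * ‖a - b‖ ^ 2 + 4 * ‖b - c‖ ^ 2 + 4 * ‖c - d‖ ^ 2 := by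
  have h : ‖a - d‖ ≤ ‖a - b‖ + (‖b - c‖ + ‖c - d‖) := by
    linarith [norm_sub_le_norm_sub_add_norm_sub a b d, norm_sub_le_norm_sub_add_norm_sub b c d]
  calc ‖a - d‖ ^ 2 ≤ (‖a - b‖ + (‖b - c‖ + ‖c - d‖)) ^ 2 := by gcongr
    _ ≤ 2 * (‖a - b‖ ^ 2 + (‖b - c‖ + ‖c - d‖) ^ 2) := add_sq_le
    _ ≤ 2 * (‖a - b‖ ^ 2 + 2 * (‖b - c‖ ^ 2 + ‖c - d‖ ^ 2)) := by gcongr; exact add_sq_le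
    _ = _ := by ring

variable [NormedSpace ℝ V]

theorem norm_sum_smul_sq_le_weighted (s : Finset ι) (a w : ι → ℝ) (K : ι → V)
    (hw : ∀ i ∈ s, 0 < w i) :
    ‖∑ i ∈ s, a i • K i‖ ^ 2 ≤ (∑ i ∈ s, a i ^ 2 / w i) * ∑ i ∈ s, w i * ‖K i‖ ^ 2 := by
  have hsum : ‖∑ i ∈ s, a i • K i‖ ≤ ∑ i ∈ s, |a i| * ‖K i‖ :=
    (norm_sum_le _ _).trans_eq (Finset.sum_congr rfl fun i _ => by
      rw [norm_smul, Real.norm_eq_abs])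
  calc ‖∑ i ∈ s, a i • K i‖ ^ 2 ≤ (∑ i ∈ s, |a i| * ‖K i‖) ^ 2 := by gcongr
    _ ≤ _ := Finset.sum_sq_le_sum_mul_sum_of_sq_le_mul s
        (fun i hi => div_nonneg (sq_nonneg _) (hw i hi).le)
        (fun i hi => mul_nonneg (hw i hi).le (sq_nonneg _))
        (fun i hi => by
          have := (hw i hi).ne'
          rw [mul_pow, sq_abs]
          exact le_of_eq (by field_simp))

theorem norm_sum_smul_sq_le (s : Finset ι) (a : ι → ℝ) (K : ι → V) :
    ‖∑ i ∈ s, a i • K i‖ ^ 2 ≤ (∑ i ∈ s, a i ^ 2) * ∑ i ∈ s, ‖K i‖ ^ 2 := by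
  simpa using norm_sum_smul_sq_le_weighted s a 1 K fun _ _ => one_pos

end NormedSpace

theorem le_mul_sq_add_of_forall_gt {a b c d : ℝ} (h : ∀ t > a, b ≤ c * t ^ 2 + d) :
    b ≤ c * a ^ 2 + d :=
  ge_of_tendsto ((by fun_prop : Continuous fun t : ℝ => c * t ^ 2 + d).continuousWithinAt
    (s := Set.Ioi a)) (eventually_nhdsWithin_of_forall h)

theorem IsCompact.le_biSup_of_continuousOn {α : Type*} [TopologicalSpace α] {P : Set α}
    {f : α → ℝ} (hP : IsCompact P) (hf : ContinuousOn f P) {x : α} (hx : x ∈ P) :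
    f x ≤ ⨆ y ∈ P, f y := by
  obtain ⟨C, hC⟩ := hP.exists_bound_of_continuousOn hf
  refine le_ciSup_of_le ⟨max C 0, ?_⟩ x (by rw [ciSup_pos hx])
  rintro _ ⟨y, rfl⟩
  exact Real.iSup_le (fun hy => (le_abs_self _).trans ((hC y hy).trans (le_max_left _ _)))
    (le_max_right _ _)

theorem exists_forall_norm_sub_le_of_iInf_lt {α V : Type*} [TopologicalSpace α]
    [SeminormedAddCommGroup V] [NormedSpace ℝ V] {P : Set α} (hP : IsCompact P)
    {S : Submodule ℝ (α → V)} (hS : ∀ φ ∈ S, ContinuousOn φ P) {L : α → V}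
    (hL : ContinuousOn L P) {t : ℝ} (ht : ⨅ φ : S, ⨆ μ ∈ P, ‖L μ - (φ : α → V) μ‖ < t) :
    ∃ φ ∈ S, ∀ μ ∈ P, ‖L μ - φ μ‖ ≤ t := by
  obtain ⟨φ, hφ⟩ := exists_lt_of_ciInf_lt ht
  exact ⟨φ, φ.2, fun μ hμ =>
    (hP.le_biSup_of_continuousOn (hL.sub (hS φ φ.2)).norm hμ).trans hφ.le⟩

section POD

variable {E : Type*} [NormedAddCommGroup E] [InnerProductSpace ℝ E] {N : ℕ}

def crossGram (u Φ : Fin N → E) : Matrix (Fin N) (Fin N) ℝ :=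
  Matrix.of fun p n => ⟪u p, Φ n⟫

structure IsPOD (u : Fin N → E) (τ : Fin N → ℝ) (ξ : Fin N → Fin N → ℝ) (Φ : Fin N → E) :
    Prop where
  eigenvalue_pos : ∀ n, 0 < τ n
  eigen : ∀ n p, τ n * ξ n p = (1 / (N : ℝ)) * ∑ q, ⟪u p, u q⟫ * ξ n q
  eigenvector_orthonormal : ∀ n m, ∑ p, ξ n p * ξ m p = if n = m then 1 else 0
  mode_eq : ∀ n, Φ n = (Real.sqrt (N * τ n))⁻¹ • ∑ p, ξ n p • u p

namespace IsPOD

variable {u : Fin N → E} {τ : Fin N → ℝ} {ξ : Fin N → Fin N → ℝ} {Φ : Fin N → E}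

theorem mul_eigenvalue_pos (h : IsPOD u τ ξ Φ) (n : Fin N) : 0 < N * τ n :=
  mul_pos (Nat.cast_pos.2 n.pos) (h.eigenvalue_pos n)

theorem sum_eigenvector_sq (h : IsPOD u τ ξ Φ) (n : Fin N) : ∑ p, ξ n p ^ 2 = 1 := by
  simpa [sq] using h.eigenvector_orthonormal n n

theorem inner_mode (h : IsPOD u τ ξ Φ) (p n : Fin N) :
    ⟪u p, Φ n⟫ = Real.sqrt (N * τ n) * ξ n p := by
  have hN : (N : ℝ) ≠ 0 := Nat.cast_ne_zero.2 p.pos.ne'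
  have hsum : ∑ q, ξ n q * ⟪u p, u q⟫ = N * τ n * ξ n p := by
    rw [mul_assoc, h.eigen]
    field_simp
    exact Finset.sum_congr rfl fun q _ => mul_comm _ _
  rw [h.mode_eq n, inner_smul_right, inner_sum]
  simp only [inner_smul_right]
  rw [hsum, ← mul_assoc, ← div_eq_inv_mul, Real.div_sqrt]

theorem orthonormal_modes (h : IsPOD u τ ξ Φ) : Orthonormal ℝ Φ := by
  rw [orthonormal_iff_ite]
  intro m n
  calc ⟪Φ m, Φ n⟫
      = (Real.sqrt (N * τ m))⁻¹ * Real.sqrt (N * τ n) * ∑ p, ξ m p * ξ n p := by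
        rw [h.mode_eq m, inner_smul_left, sum_inner]
        simp only [inner_smul_left, h.inner_mode, conj_trivial, mul_left_comm (ξ m _),
          ← Finset.mul_sum, mul_assoc]
    _ = if m = n then 1 else 0 := by
        rw [h.eigenvector_orthonormal]
        split_ifs with hmn
        · subst hmn
          rw [inv_mul_cancel₀ (Real.sqrt_pos.2 (h.mul_eigenvalue_pos m)).ne', mul_one]
        · simp

theorem sum_inner_mode_sq (h : IsPOD u τ ξ Φ) (n : Fin N) :
    ∑ p, ⟪u p, Φ n⟫ ^ 2 = N * τ n := by
  simp only [h.inner_mode, mul_pow, ← Finset.mul_sum, h.sum_eigenvector_sq, mul_one]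
  exact Real.sq_sqrt (h.mul_eigenvalue_pos n).le

theorem crossGram_left_inv (h : IsPOD u τ ξ Φ) :
    (Matrix.diagonal (fun n => (Real.sqrt (N * τ n))⁻¹) * Matrix.of ξ) * crossGram u Φ = 1 := by
  have hgram : crossGram u Φ = (Matrix.of ξ)ᵀ * Matrix.diagonal fun n => Real.sqrt (N * τ n) := by
    ext p n
    simp [crossGram, h.inner_mode, mul_comm]
  have hξ : Matrix.of ξ * (Matrix.of ξ)ᵀ = 1 := by
    ext n m
    simp [Matrix.mul_apply, Matrix.one_apply, h.eigenvector_orthonormal]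
  rw [hgram, Matrix.mul_assoc, ← Matrix.mul_assoc (Matrix.of ξ), hξ, Matrix.one_mul,
    Matrix.diagonal_mul_diagonal]
  exact (congrArg Matrix.diagonal (funext fun n =>
    inv_mul_cancel₀ (Real.sqrt_pos.2 (h.mul_eigenvalue_pos n)).ne')).trans Matrix.diagonal_one

theorem inv_crossGram (h : IsPOD u τ ξ Φ) :
    (crossGram u Φ)⁻¹ = Matrix.diagonal (fun n => (Real.sqrt (N * τ n))⁻¹) * Matrix.of ξ :=
  Matrix.inv_eq_left_inv h.crossGram_left_inv

theorem inv_crossGram_mul_crossGram (h : IsPOD u τ ξ Φ) :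
    (crossGram u Φ)⁻¹ * crossGram u Φ = 1 := by
  rw [h.inv_crossGram]
  exact h.crossGram_left_inv

theorem crossGram_mul_inv_crossGram (h : IsPOD u τ ξ Φ) :
    crossGram u Φ * (crossGram u Φ)⁻¹ = 1 :=
  mul_eq_one_comm.mp h.inv_crossGram_mul_crossGram

theorem sum_inv_crossGram_sq (h : IsPOD u τ ξ Φ) (n : Fin N) :
    ∑ p, (crossGram u Φ)⁻¹ n p ^ 2 = ((N : ℝ) * τ n)⁻¹ := by
  simp only [h.inv_crossGram, Matrix.diagonal_mul, Matrix.of_apply, mul_pow, ← Finset.mul_sum,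
    h.sum_eigenvector_sq, mul_one, inv_pow]
  rw [Real.sq_sqrt (h.mul_eigenvalue_pos n).le]

end IsPOD

end POD

section Interpolation

variable {α E V : Type*} [NormedAddCommGroup E] [InnerProductSpace ℝ E]
  [SeminormedAddCommGroup V] [NormedSpace ℝ V] {N : ℕ}

def interpolationCoeff (x : Fin N → α) (B : Matrix (Fin N) (Fin N) ℝ) (v : α → V) (n : Fin N) :
    V :=
  ∑ p, B n p • v (x p)

/-- With `B = G⁻¹` this is the operator `J^N`. -/
def interpolation (g : α → E) (Φ : Fin N → E) (x : Fin N → α) (B : Matrix (Fin N) (Fin N) ℝ) :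
    (α → V) →ₗ[ℝ] (α → V) where
  toFun v μ := ∑ n, ⟪g μ, Φ n⟫ • ∑ p, B n p • v (x p)
  map_add' v w := by
    funext μ
    simp [smul_add, Finset.sum_add_distrib]
  map_smul' c v := by
    funext μ
    simp [Finset.smul_sum, smul_comm c]

variable {g : α → E} {Φ : Fin N → E} {x : Fin N → α} {B : Matrix (Fin N) (Fin N) ℝ}

theorem interpolation_apply (v : α → V) (μ : α) :
    interpolation g Φ x B v μ = ∑ n, ⟪g μ, Φ n⟫ • interpolationCoeff x B v n :=
  rfl

theorem interpolationCoeff_interpolation (hBG : B * crossGram (fun p => g (x p)) Φ = 1)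
    (v : α → V) (n : Fin N) :
    interpolationCoeff x B (interpolation g Φ x B v) n = interpolationCoeff x B v n := by
  calc interpolationCoeff x B (interpolation g Φ x B v) n
      = ∑ p, ∑ m, (B n p * crossGram (fun p => g (x p)) Φ p m) • interpolationCoeff x B v m := by
        rw [interpolationCoeff]
        simp only [interpolation_apply, Finset.smul_sum, smul_smul]
        rfl
    _ = ∑ m, (B * crossGram (fun p => g (x p)) Φ) n m • interpolationCoeff x B v m := by
        rw [Finset.sum_comm]
        simp only [Matrix.mul_apply, Finset.sum_smul]
    _ = interpolationCoeff x B v n := by simp [hBG, Matrix.one_apply]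

theorem interpolation_eq_self_of_mem_span (hBG : B * crossGram (fun p => g (x p)) Φ = 1)
    {φ : α → V} (hφ : φ ∈ Submodule.span ℝ (Set.range (interpolation g Φ x B))) :
    interpolation g Φ x B φ = φ := by
  rw [← LinearMap.coe_range, Submodule.span_eq] at hφ
  obtain ⟨v, rfl⟩ := hφ
  funext μ
  simp only [interpolation_apply, interpolationCoeff_interpolation hBG]

theorem continuousOn_of_mem_span_range_interpolation [TopologicalSpace α] {P : Set α}
    (hg : ContinuousOn g P) (hBG : B * crossGram (fun p => g (x p)) Φ = 1) {φ : α → V}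
    (hφ : φ ∈ Submodule.span ℝ (Set.range (interpolation g Φ x B))) : ContinuousOn φ P := by
  rw [← interpolation_eq_self_of_mem_span hBG hφ]
  refine (continuousOn_finsetSum _ fun n _ => ?_).congr fun μ _ => interpolation_apply φ μ
  exact (hg.inner continuousOn_const).smul continuousOn_const

theorem sum_smul_interpolationCoeff (w : Fin N → ℝ) (v : α → V) :
    ∑ n, w n • interpolationCoeff x B v n = ∑ p, (w ᵥ* B) p • v (x p) := by
  simp only [interpolationCoeff, Finset.smul_sum, smul_smul, Matrix.vecMul, dotProduct,
    Finset.sum_smul]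
  exact Finset.sum_comm

theorem sum_smul_sub_interpolation (hGB : crossGram (fun p => g (x p)) Φ * B = 1)
    (lam : Fin N → ℝ) (v : α → V) (μ : α) :
    ∑ p, lam p • v (x p) - interpolation g Φ x B v μ =
      ∑ n, ⟪∑ p, lam p • g (x p) - g μ, Φ n⟫ • interpolationCoeff x B v n := by
  have hinner : ∀ n, ⟪∑ p, lam p • g (x p), Φ n⟫ = (lam ᵥ* crossGram (fun p => g (x p)) Φ) n :=
    fun n => by simp [sum_inner, inner_smul_left, Matrix.vecMul, dotProduct, crossGram]
  rw [interpolation_apply]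
  simp only [inner_sub_left, sub_smul, Finset.sum_sub_distrib, hinner,
    sum_smul_interpolationCoeff, Matrix.vecMul_vecMul, hGB, Matrix.vecMul_one]

theorem norm_sq_sum_smul_sub_interpolation_le (hΦ : Orthonormal ℝ Φ)
    (hGB : crossGram (fun p => g (x p)) Φ * B = 1) (lam : Fin N → ℝ) (v : α → V) (μ : α) :
    ‖∑ p, lam p • v (x p) - interpolation g Φ x B v μ‖ ^ 2 ≤
      ‖∑ p, lam p • g (x p) - g μ‖ ^ 2 * ∑ n, ‖interpolationCoeff x B v n‖ ^ 2 := by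
  rw [sum_smul_sub_interpolation hGB]
  refine (norm_sum_smul_sq_le _ _ _).trans (mul_le_mul_of_nonneg_right ?_ (by positivity))
  simpa [real_inner_comm] using hΦ.sum_inner_products_le (s := Finset.univ)
    (∑ p, lam p • g (x p) - g μ)

theorem norm_sq_interpolationCoeff_le {M : ℝ} {v : α → V} (hv : ∀ p, ‖v (x p)‖ ^ 2 ≤ M)
    (n : Fin N) : ‖interpolationCoeff x B v n‖ ^ 2 ≤ (∑ p, B n p ^ 2) * (N * M) := by
  refine (norm_sum_smul_sq_le _ _ _).trans (mul_le_mul_of_nonneg_left ?_ (by positivity))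
  simpa using Finset.sum_le_sum fun p (_ : p ∈ Finset.univ) => hv p

theorem sum_norm_sq_interpolationCoeff_le {τ : Fin N → ℝ} {τmin M : ℝ} (hτmin : 0 < τmin)
    (hmin : ∀ n, τmin ≤ τ n) (hB : ∀ n, ∑ p, B n p ^ 2 = (N * τ n)⁻¹) {v : α → V}
    (hv : ∀ p, ‖v (x p)‖ ^ 2 ≤ M) :
    ∑ n, ‖interpolationCoeff x B v n‖ ^ 2 ≤ N * M / τmin := by
  have hterm : ∀ n, ‖interpolationCoeff x B v n‖ ^ 2 ≤ M / τmin := fun n => by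
    have hN : (N : ℝ) ≠ 0 := Nat.cast_ne_zero.2 n.pos.ne'
    have hτ : 0 < τ n := hτmin.trans_le (hmin n)
    calc ‖interpolationCoeff x B v n‖ ^ 2 ≤ (N * τ n)⁻¹ * (N * M) :=
          hB n ▸ norm_sq_interpolationCoeff_le hv n
      _ = M / τ n := by field_simp
      _ ≤ M / τmin := div_le_div_of_nonneg_left ((sq_nonneg _).trans (hv n)) hτmin (hmin n)
  simpa [mul_div_assoc] using Finset.sum_le_sum fun n (_ : n ∈ Finset.univ) => hterm n

theorem norm_sq_interpolation_le {τ : Fin N → ℝ} (hτ : ∀ n, 0 < τ n)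
    (hB : ∀ n, ∑ p, B n p ^ 2 = (N * τ n)⁻¹) {v : α → V} {t : ℝ} (hv : ∀ p, ‖v (x p)‖ ≤ t)
    (μ : α) :
    ‖interpolation g Φ x B v μ‖ ^ 2 ≤ N * t ^ 2 * ∑ n, ⟪g μ, Φ n⟫ ^ 2 / τ n := by
  have hterm : ∀ n, τ n * ‖interpolationCoeff x B v n‖ ^ 2 ≤ t ^ 2 := fun n => by
    have hN : (N : ℝ) ≠ 0 := Nat.cast_ne_zero.2 n.pos.ne'
    have hv2 : ∀ p, ‖v (x p)‖ ^ 2 ≤ t ^ 2 := fun p => pow_le_pow_left₀ (norm_nonneg _) (hv p) 2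
    calc τ n * ‖interpolationCoeff x B v n‖ ^ 2 ≤ τ n * ((N * τ n)⁻¹ * (N * t ^ 2)) :=
          mul_le_mul_of_nonneg_left (hB n ▸ norm_sq_interpolationCoeff_le hv2 n) (hτ n).le
      _ = t ^ 2 := by field_simp [(hτ n).ne']
  calc ‖interpolation g Φ x B v μ‖ ^ 2
      ≤ (∑ n, ⟪g μ, Φ n⟫ ^ 2 / τ n) * ∑ n, τ n * ‖interpolationCoeff x B v n‖ ^ 2 := by
        rw [interpolation_apply]
        exact norm_sum_smul_sq_le_weighted _ _ _ _ fun n _ => hτ n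
    _ ≤ (∑ n, ⟪g μ, Φ n⟫ ^ 2 / τ n) * (N * t ^ 2) := by
        gcongr
        · exact Finset.sum_nonneg fun n _ => div_nonneg (sq_nonneg _) (hτ n).le
        · simpa using Finset.sum_le_sum fun n (_ : n ∈ Finset.univ) => hterm n
    _ = N * t ^ 2 * ∑ n, ⟪g μ, Φ n⟫ ^ 2 / τ n := mul_comm _ _

theorem norm_sq_sum_smul_sub_le (hΦ : Orthonormal ℝ Φ)
    (hBG : B * crossGram (fun p => g (x p)) Φ = 1) (hGB : crossGram (fun p => g (x p)) Φ * B = 1)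
    {τ : Fin N → ℝ} (hτ : ∀ n, 0 < τ n) (hB : ∀ n, ∑ p, B n p ^ 2 = (N * τ n)⁻¹) {L φ : α → V}
    (hφ : φ ∈ Submodule.span ℝ (Set.range (interpolation g Φ x B))) {t : ℝ}
    (hnode : ∀ p, ‖L (x p) - φ (x p)‖ ≤ t) (lam : Fin N → ℝ) {μ : α}
    (hμ : ‖L μ - φ μ‖ ≤ t) :
    ‖∑ p, lam p • L (x p) - L μ‖ ^ 2 ≤
      2 * (∑ n, ‖interpolationCoeff x B L n‖ ^ 2) * ‖∑ p, lam p • g (x p) - g μ‖ ^ 2 +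
        4 * (N * t ^ 2 * ∑ n, ⟪g μ, Φ n⟫ ^ 2 / τ n) + 4 * t ^ 2 := by
  have hinterp := norm_sq_sum_smul_sub_interpolation_le hΦ hGB lam L μ
  have hbest : ‖interpolation g Φ x B L μ - φ μ‖ ^ 2 ≤
      N * t ^ 2 * ∑ n, ⟪g μ, Φ n⟫ ^ 2 / τ n := by
    conv_lhs => rw [← interpolation_eq_self_of_mem_span hBG hφ, ← Pi.sub_apply, ← map_sub]
    exact norm_sq_interpolation_le hτ hB hnode μ
  have hφμ : ‖φ μ - L μ‖ ^ 2 ≤ t ^ 2 := by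
    rw [norm_sub_rev]
    exact pow_le_pow_left₀ (norm_nonneg _) hμ 2
  have := norm_sub_sq_le_of_chain (∑ p, lam p • L (x p)) (interpolation g Φ x B L μ) (φ μ) (L μ)
  linarith

theorem setIntegral_norm_sq_sum_smul_sub_le [TopologicalSpace α] [T2Space α] [MeasurableSpace α]
    [OpensMeasurableSpace α] {ν : Measure α} [IsFiniteMeasureOnCompacts ν] {P : Set α}
    (hP : IsCompact P) (hg : ContinuousOn g P) {lam : α → Fin N → ℝ}
    (hlam : ∀ n, ContinuousOn (fun μ => lam μ n) P) (hx : ∀ p, x p ∈ P)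
    (hΦ : Orthonormal ℝ Φ) (hBG : B * crossGram (fun p => g (x p)) Φ = 1)
    (hGB : crossGram (fun p => g (x p)) Φ * B = 1) {τ : Fin N → ℝ} {τmin : ℝ} (hτmin : 0 < τmin)
    (hmin : ∀ n, τmin ≤ τ n) (hB : ∀ n, ∑ p, B n p ^ 2 = (N * τ n)⁻¹) {L φ : α → V} {M : ℝ}
    (hLM : ∀ p, ‖L (x p)‖ ^ 2 ≤ M)
    (hφ : φ ∈ Submodule.span ℝ (Set.range (interpolation g Φ x B))) {t : ℝ}
    (ht : ∀ μ ∈ P, ‖L μ - φ μ‖ ≤ t) :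
    ∫ μ in P, ‖∑ p, lam μ p • L (x p) - L μ‖ ^ 2 ∂ν ≤
      2 * (N * M / τmin) * ∫ μ in P, ‖∑ p, lam μ p • g (x p) - g μ‖ ^ 2 ∂ν +
        4 * (N * t ^ 2 * ∑ n, (∫ μ in P, ⟪g μ, Φ n⟫ ^ 2 ∂ν) / τ n) + 4 * t ^ 2 * (ν P).toReal := by
  have hτ : ∀ n, 0 < τ n := fun n => hτmin.trans_le (hmin n)
  have hcoef := sum_norm_sq_interpolationCoeff_le hτmin hmin hB hLM
  have herr : IntegrableOn (fun μ => ‖∑ p, lam μ p • g (x p) - g μ‖ ^ 2) P ν :=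
    ContinuousOn.integrableOn_compact hP <|
      ((continuousOn_finsetSum _ fun p _ => (hlam p).smul continuousOn_const).sub hg).norm.pow 2
  have hmode : ∀ n, IntegrableOn (fun μ => ⟪g μ, Φ n⟫ ^ 2 / τ n) P ν := fun n =>
    ContinuousOn.integrableOn_compact hP <| ((hg.inner continuousOn_const).pow 2).div_const _
  have hΛ : IntegrableOn (fun μ => 4 * (N * t ^ 2) * ∑ n, ⟪g μ, Φ n⟫ ^ 2 / τ n) P ν :=
    (integrable_finsetSum Finset.univ fun n _ => hmode n).const_mul _
  have hconst : IntegrableOn (fun _ => 4 * t ^ 2) P ν := integrableOn_const hP.measure_lt_top.ne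
  have hΛc : IntegrableOn (fun μ => 4 * (N * t ^ 2) * ∑ n, ⟪g μ, Φ n⟫ ^ 2 / τ n + 4 * t ^ 2) P ν :=
    hΛ.add hconst
  calc ∫ μ in P, ‖∑ p, lam μ p • L (x p) - L μ‖ ^ 2 ∂ν
      ≤ ∫ μ in P, (2 * (N * M / τmin) * ‖∑ p, lam μ p • g (x p) - g μ‖ ^ 2 +
          (4 * (N * t ^ 2) * ∑ n, ⟪g μ, Φ n⟫ ^ 2 / τ n + 4 * t ^ 2)) ∂ν := by
        refine integral_mono_of_nonneg (.of_forall fun _ => by positivity)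
          ((herr.const_mul _).add hΛc) ((ae_restrict_iff' hP.measurableSet).2
            (.of_forall fun μ hμ => ?_))
        have := norm_sq_sum_smul_sub_le hΦ hBG hGB hτ hB hφ (fun p => ht _ (hx p)) (lam μ)
          (ht μ hμ)
        have := mul_le_mul_of_nonneg_right hcoef
          (sq_nonneg ‖∑ p, lam μ p • g (x p) - g μ‖)
        linarith
    _ = _ := by
        rw [integral_add (herr.const_mul _) hΛc, integral_add hΛ hconst, integral_const_mul,
          integral_const_mul, integral_finsetSum _ fun n _ => hmode n, setIntegral_const,
          smul_eq_mul, measureReal_def]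
        simp only [integral_div]
        ring

end Interpolation

/-- (Proposition 1 of the paper.) In the approximation setting (EIM
coefficients `λ`, snapshots `g (μ n)`, POD eigenpairs `(τ, ξ)` and modes `Φ`, matrix `G`,
constant `Z_N`, EIM error `δ_N²`, quantity of interest `L : P → V` approximated by
`X^N_μ = ∑ n, λ n (μ) • L (μ n)`), one has
`(1/|P|) ∫_P ‖X^N_μ − L_μ‖² dμ ≤ 4 (1 + N² Z_N) θ² + (8/|P|) (sup_{μ∈P} ‖L_μ‖²) N δ_N²/τ_N`,
where `θ = inf_{φ ∈ S^{sN}} sup_{μ ∈ P} ‖L_μ − φ(μ)‖` and `S^{sN}` is the linear span of the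
range of the interpolating projector `J^N`. -/
theorem approximation_error_bound_kolmogorov
    (r N q : ℕ) (hN : 0 < N)
    (K : Set (EuclideanSpace ℝ (Fin q)))
    (P : Set (EuclideanSpace ℝ (Fin r))) (hP : IsCompact P)
    (hPpos : 0 < (volume P).toReal)
    (g : EuclideanSpace ℝ (Fin r) → Lp ℝ 2 (volume.restrict K))
    (hg : ContinuousOn g P)
    (μs : Fin N → EuclideanSpace ℝ (Fin r)) (hμs : ∀ n, μs n ∈ P)
    (lam : EuclideanSpace ℝ (Fin r) → Fin N → ℝ)
    (hlam : ∀ n, ContinuousOn (fun μ => lam μ n) P)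
    (δsq : ℝ)
    (hδsq : δsq = ∫ μ in P, ‖(∑ n, lam μ n • g (μs n)) - g μ‖ ^ 2)
    (τ : Fin N → ℝ) (ξ : Fin N → Fin N → ℝ)
    (hτmono : ∀ i j : Fin N, i ≤ j → τ j ≤ τ i)
    (hτpos : ∀ n, 0 < τ n)
    (heig : ∀ n p, τ n * ξ n p =
        (1 / (N : ℝ)) * ∑ q', ⟪g (μs p), g (μs q')⟫ * ξ n q')
    (horth : ∀ n m, ∑ p, ξ n p * ξ m p = if n = m then (1 : ℝ) else 0)
    (Φ : Fin N → Lp ℝ 2 (volume.restrict K))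
    (hΦ : ∀ n, Φ n = (Real.sqrt (N * τ n))⁻¹ • ∑ p, ξ n p • g (μs p))
    (G : Matrix (Fin N) (Fin N) ℝ)
    (hG : ∀ n p, G n p = ⟪g (μs n), Φ p⟫)
    (Z : ℝ)
    (hZ : Z = (1 / (N : ℝ)) * ∑ n,
        (∫ μ in P, ⟪g μ, Φ n⟫ ^ 2) /
          (((volume P).toReal / N) * ∑ p, ⟪g (μs p), Φ n⟫ ^ 2))
    (V : Type) [NormedAddCommGroup V] [InnerProductSpace ℝ V]
    (L : EuclideanSpace ℝ (Fin r) → V) (hL : ContinuousOn L P)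
    (S : Submodule ℝ (EuclideanSpace ℝ (Fin r) → V))
    (hS : S = Submodule.span ℝ (Set.range
        (fun v : EuclideanSpace ℝ (Fin r) → V =>
          fun μ => ∑ n, ⟪g μ, Φ n⟫ • ∑ p, G⁻¹ n p • v (μs p))))
    (θ : ℝ)
    (hθ : θ = ⨅ φ : S, ⨆ μ ∈ P, ‖L μ - (φ : EuclideanSpace ℝ (Fin r) → V) μ‖) :
    (1 / (volume P).toReal) * ∫ μ in P, ‖(∑ n, lam μ n • L (μs n)) - L μ‖ ^ 2 ≤
      4 * (1 + (N : ℝ) ^ 2 * Z) * θ ^ 2 +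
        (8 / (volume P).toReal) * (⨆ μ ∈ P, ‖L μ‖ ^ 2) *
          ((N : ℝ) * δsq / τ ⟨N - 1, by omega⟩) := by
  have hpod : IsPOD (fun p => g (μs p)) τ ξ Φ := ⟨hτpos, heig, horth, hΦ⟩
  obtain rfl : G = crossGram (fun p => g (μs p)) Φ := Matrix.ext hG
  set τmin := τ ⟨N - 1, by omega⟩
  have hτmin : ∀ n, τmin ≤ τ n := fun n => hτmono n _ (Fin.le_def.2 (by simp; omega))
  set M := ⨆ μ ∈ P, ‖L μ‖ ^ 2
  have hLM : ∀ p, ‖L (μs p)‖ ^ 2 ≤ M := fun p =>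
    hP.le_biSup_of_continuousOn (hL.norm.pow 2) (hμs p)
  have hmodes : ∑ n, (∫ μ in P, ⟪g μ, Φ n⟫ ^ 2) / τ n = N * (volume P).toReal * Z := by
    rw [hZ, Finset.mul_sum, Finset.mul_sum]
    refine Finset.sum_congr rfl fun n _ => ?_
    rw [hpod.sum_inner_mode_sq]
    field_simp
  have hslack : 0 ≤ M * (N * δsq / τmin) := mul_nonneg ((sq_nonneg _).trans (hLM ⟨0, hN⟩))
    (div_nonneg (mul_nonneg N.cast_nonneg (hδsq ▸ integral_nonneg fun _ => by positivity))
      (hτpos _).le)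
  refine le_mul_sq_add_of_forall_gt fun t ht => ?_
  obtain ⟨φ, hφS, hφ⟩ := exists_forall_norm_sub_le_of_iInf_lt hP (fun φ hφ =>
    continuousOn_of_mem_span_range_interpolation hg hpod.inv_crossGram_mul_crossGram (hS ▸ hφ))
    hL (hθ ▸ ht)
  have hint := setIntegral_norm_sq_sum_smul_sub_le (ν := volume) hP hg hlam hμs
    hpod.orthonormal_modes hpod.inv_crossGram_mul_crossGram hpod.crossGram_mul_inv_crossGram
    (hτpos _) hτmin hpod.sum_inv_crossGram_sq hLM (hS ▸ hφS) hφ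
  rw [hmodes, ← hδsq] at hint
  calc (1 / (volume P).toReal) * ∫ μ in P, ‖(∑ n, lam μ n • L (μs n)) - L μ‖ ^ 2
      ≤ 4 * (1 + (N : ℝ) ^ 2 * Z) * t ^ 2 + 2 / (volume P).toReal * (M * (N * δsq / τmin)) := by
        rw [one_div_mul_eq_div, div_le_iff₀ hPpos]
        refine hint.trans_eq ?_
        field_simp
        ring
    _ ≤ _ := by
        rw [mul_assoc (8 / _)]
        gcongr
        norm_num
end

section
/- (Corollary, log-determinant case.) In the approximation setting with V := ℝ and L_μ := log det A_μ − N̂ log ρ_M, assume: A_μ := Σ_{l=1}^d α_l(μ) A_l is a symmetric positive definite real N̂×N̂ matrix for every μ ∈ P, where α_1, …, α_d : P → ℝ are continuous and A_1, …, A_d are real N̂×N̂ matrices; 0 < ρ₀ ≤ ρ_M are real numbers such that every eigenvalue r of every A_μ satisfies ρ₀ ≤ r < ρ_M; m ≥ 1 and there is a continuous linear map X_m : U → ℝ with X_m g_μ = −Σ_{k=1}^{m−1} tr((I − (1/ρ_M) A_μ)^k)/k for every μ ∈ P; the interpolation is exact: g_μ = Σ_{n=1}^N λ_n(μ) g_{μ_n}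 in U for every μ ∈ P; and the coefficients satisfy Σ_{n=1}^N λ_n(μ) = 1 for every μ ∈ P. Then (1/|P|) ∫_P |Σ_{n=1}^N λ_n(μ) log det A_{μ_n} − log det A_μ|² dμ ≤ 3 (N̂²/m²) (ρ_M/ρ₀)² (1 − ρ₀/ρ_M)^{2m} (1 + 2 N² Z_N). -/
/-!
Put `R(A) = log det A - N̂ log ρ_M + ∑_{k<m} tr((1 - A/ρ_M)^k)/k`, so that
`log det A_μ = N̂ log ρ_M + X_m g_μ + R(A_μ)`. In an eigenbasis of `A_μ`, `R(A_μ)` is a sum of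
Taylor tails `log(1 - x) + ∑_{k<m} x^k/k` at `x = 1 - e/ρ_M ∈ [0, 1 - ρ₀/ρ_M]`, each at most
`x^m / (m (1 - x))` in absolute value, so `|R(A_μ)| ≤ c := N̂ (ρ_M/ρ₀)(1 - ρ₀/ρ_M)^m / m`.
Exact interpolation with `∑ λ_n = 1` reproduces the affine part `N̂ log ρ_M + X_m g_μ`, so the
error is `∑ λ_n R(A_{μ_n}) - R(A_μ)`, whose square is at most `2c² (1 + N ∑ λ_n²)` by
Cauchy–Schwarz. Since the `ξ_n` are orthonormal, `Z_N` is the mean of `∑ λ_n²` over `P`.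
-/

open Finset Real Matrix MeasureTheory Bornology
open scoped RealInnerProductSpace

lemma abs_log_one_sub_add_sum_pow_div_le {x : ℝ} (hx0 : 0 ≤ x) (hx1 : x < 1) {m : ℕ}
    (hm : 1 ≤ m) :
    |log (1 - x) + ∑ k ∈ Icc 1 (m - 1), x ^ k / k| ≤ x ^ m / (m * (1 - x)) := by
  obtain ⟨n, rfl⟩ := Nat.exists_eq_add_of_le' hm
  have hpartial : ∑ k ∈ Icc 1 (n + 1 - 1), x ^ k / k =
      ∑ i ∈ range n, x ^ (i + 1) / (i + 1) := by
    rw [Nat.add_sub_cancel, ← Finset.Ico_add_one_right_eq_Icc, sum_Ico_eq_sum_range]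
    simp [add_comm]
  have htail : HasSum (fun i : ℕ => x ^ (i + n + 1) / (i + n + 1))
      (-log (1 - x) - ∑ i ∈ range n, x ^ (i + 1) / (i + 1)) := by
    simpa [add_assoc] using (hasSum_nat_add_iff' n).mpr
      (hasSum_pow_div_log_of_abs_lt_one (abs_lt.2 ⟨by linarith, hx1⟩))
  have hgeom := (hasSum_geometric_of_lt_one hx0 hx1).mul_left (x ^ (n + 1) / (n + 1))
  have hle := hasSum_le (fun i => ?_) htail hgeom
  · have hnonneg := htail.nonneg fun i => by positivity
    have hbound : x ^ (n + 1) / ((n + 1 : ℕ) * (1 - x)) =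
        x ^ (n + 1) / (n + 1) * (1 - x)⁻¹ := by
      push_cast; field_simp
    rw [hpartial, hbound, abs_le]
    constructor <;> linarith
  · calc x ^ (i + n + 1) / (i + n + 1) ≤ x ^ (i + n + 1) / (n + 1) :=
          div_le_div_of_nonneg_left (by positivity) (by positivity) (by simp)
      _ = x ^ (n + 1) / (n + 1) * x ^ i := by ring

lemma abs_log_div_add_sum_pow_div_le {ρ₀ ρ e : ℝ} (hρ₀ : 0 < ρ₀) (he₀ : ρ₀ ≤ e) (heρ : e < ρ)
    {m : ℕ} (hm : 1 ≤ m) :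
    |log (e / ρ) + ∑ k ∈ Icc 1 (m - 1), (1 - ρ⁻¹ * e) ^ k / k| ≤
      ρ / ρ₀ * (1 - ρ₀ / ρ) ^ m / m := by
  have hρ : 0 < ρ := by linarith
  have hx0 : 0 ≤ 1 - ρ⁻¹ * e := by
    rw [sub_nonneg, inv_mul_le_iff₀ hρ]; linarith
  have hx1 : 1 - ρ⁻¹ * e < 1 := by
    rw [sub_lt_self_iff]; exact mul_pos (inv_pos.2 hρ) (hρ₀.trans_le he₀)
  have hxρ₀ : 1 - ρ⁻¹ * e ≤ 1 - ρ₀ / ρ := by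
    rw [sub_le_sub_iff_left, div_eq_inv_mul]; gcongr
  have hc0 : 0 ≤ 1 - ρ₀ / ρ := hx0.trans hxρ₀
  have h1x : 1 - (1 - ρ⁻¹ * e) = e / ρ := by field_simp; ring
  have hbound := abs_log_one_sub_add_sum_pow_div_le hx0 hx1 hm
  rw [h1x] at hbound
  refine hbound.trans ?_
  calc (1 - ρ⁻¹ * e) ^ m / (m * (e / ρ)) ≤ (1 - ρ₀ / ρ) ^ m / (m * (ρ₀ / ρ)) := by gcongr
    _ = ρ / ρ₀ * (1 - ρ₀ / ρ) ^ m / m := by field_simp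

namespace Matrix

variable {n : Type*} [Fintype n] [DecidableEq n]

lemma IsHermitian.trace_pow_one_sub_smul {A : Matrix n n ℝ} (hA : A.IsHermitian) (c : ℝ)
    (k : ℕ) : ((1 - c • A) ^ k).trace = ∑ i, (1 - c * hA.eigenvalues i) ^ k := by
  have hcfc : (1 - c • A) ^ k = cfc (fun x => (1 - c * x) ^ k) A := by
    rw [cfc_pow (fun x => 1 - c * x) k A, cfc_sub _ _ A, cfc_const_mul c _ A, cfc_const_one ℝ A,
      cfc_id' ℝ A]
  rw [hcfc, cfc_eq hA, IsHermitian.cfc, Unitary.conjStarAlgAut_apply, trace_mul_cycle,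
    Unitary.coe_star_mul_self, one_mul, trace_diagonal]
  rfl

/-- The paper's `L_μ - X_m g_μ` when `M = A_μ` and `ρ = ρ_M`. -/
noncomputable def logDetRemainder (ρ : ℝ) (m : ℕ) (M : Matrix n n ℝ) : ℝ :=
  log M.det - Fintype.card n * log ρ + ∑ k ∈ Icc 1 (m - 1), ((1 - ρ⁻¹ • M) ^ k).trace / k

variable {M : Matrix n n ℝ} {ρ₀ ρ : ℝ} {m : ℕ}

lemma IsHermitian.logDetRemainder_eq_sum (hM : M.IsHermitian)
    (hpos : ∀ i, 0 < hM.eigenvalues i) (hρ : 0 < ρ) :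
    M.logDetRemainder ρ m = ∑ i, (log (hM.eigenvalues i / ρ) +
      ∑ k ∈ Icc 1 (m - 1), (1 - ρ⁻¹ * hM.eigenvalues i) ^ k / k) := by
  have hdet : log M.det = ∑ i, log (hM.eigenvalues i) := by
    rw [hM.det_eq_prod_eigenvalues]
    exact log_prod fun i _ => (hpos i).ne'
  simp only [logDetRemainder, hM.trace_pow_one_sub_smul, hdet, sum_div, sum_add_distrib,
    log_div (hpos _).ne' hρ.ne', sum_sub_distrib, sum_const, card_univ, nsmul_eq_mul]
  rw [sum_comm]

lemma IsHermitian.abs_logDetRemainder_le (hM : M.IsHermitian) (hρ₀ : 0 < ρ₀) (hρ₀ρ : ρ₀ ≤ ρ)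
    (hspec : spectrum ℝ M ⊆ Set.Ico ρ₀ ρ) (hm : 1 ≤ m) :
    |M.logDetRemainder ρ m| ≤ Fintype.card n * (ρ / ρ₀ * (1 - ρ₀ / ρ) ^ m / m) := by
  have hev : ∀ i, hM.eigenvalues i ∈ Set.Ico ρ₀ ρ :=
    fun i => hspec (hM.eigenvalues_mem_spectrum_real i)
  rw [hM.logDetRemainder_eq_sum (fun i => hρ₀.trans_le (hev i).1) (hρ₀.trans_le hρ₀ρ)]
  calc _ ≤ ∑ i, |log (hM.eigenvalues i / ρ) +
        ∑ k ∈ Icc 1 (m - 1), (1 - ρ⁻¹ * hM.eigenvalues i) ^ k / k| := abs_sum_le_sum_abs _ _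
    _ ≤ ∑ _i : n, ρ / ρ₀ * (1 - ρ₀ / ρ) ^ m / m :=
        sum_le_sum fun i _ => abs_log_div_add_sum_pow_div_le hρ₀ (hev i).1 (hev i).2 hm
    _ = _ := by rw [sum_const, card_univ, nsmul_eq_mul]

end Matrix

lemma sum_mul_sub_eq_of_eq_affine_add {ι V : Type*} [Fintype ι] [AddCommGroup V] [Module ℝ V]
    (ℓ : V →ₗ[ℝ] ℝ) (a : ℝ) {w f R : ι → ℝ} {f₀ R₀ : ℝ} {v : ι → V} {v₀ : V}
    (hv₀ : v₀ = ∑ i, w i • v i) (hw : ∑ i, w i = 1)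
    (hf : ∀ i, f i = a + ℓ (v i) + R i) (hf₀ : f₀ = a + ℓ v₀ + R₀) :
    ∑ i, w i * f i - f₀ = ∑ i, w i * R i - R₀ := by
  simp only [hf, hf₀, hv₀, map_sum, map_smul, smul_eq_mul, mul_add, sum_add_distrib, ← sum_mul,
    hw]
  ring

lemma sq_abs_sum_mul_sub_le {ι : Type*} [Fintype ι] {w R : ι → ℝ} {R₀ c : ℝ}
    (hR : ∀ i, |R i| ≤ c) (hR₀ : |R₀| ≤ c) :
    |∑ i, w i * R i - R₀| ^ 2 ≤ 2 * c ^ 2 + 2 * c ^ 2 * Fintype.card ι * ∑ i, w i ^ 2 := by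
  have hsum : |∑ i, w i * R i| ≤ (∑ i, |w i|) * c :=
    calc |∑ i, w i * R i| ≤ ∑ i, |w i| * |R i| := by
          simpa only [abs_mul] using abs_sum_le_sum_abs (fun i => w i * R i) univ
      _ ≤ (∑ i, |w i|) * c := by
        rw [sum_mul]
        exact sum_le_sum fun i _ => mul_le_mul_of_nonneg_left (hR i) (abs_nonneg _)
  have hCS : (∑ i, |w i|) ^ 2 ≤ Fintype.card ι * ∑ i, w i ^ 2 := by
    simpa only [sq_abs, card_univ] using
      sq_sum_le_card_mul_sum_sq (s := univ) (f := fun i => |w i|)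
  have hdiff : |∑ i, w i * R i - R₀| ≤ (∑ i, |w i|) * c + c :=
    (abs_sub _ _).trans (add_le_add hsum hR₀)
  have hc : 0 ≤ c := (abs_nonneg _).trans hR₀
  calc |∑ i, w i * R i - R₀| ^ 2 ≤ ((∑ i, |w i|) * c + c) ^ 2 :=
        pow_le_pow_left₀ (abs_nonneg _) hdiff 2
    _ ≤ 2 * c ^ 2 + 2 * c ^ 2 * (∑ i, |w i|) ^ 2 := by
        nlinarith [sq_nonneg ((∑ i, |w i|) * c - c)]
    _ ≤ _ := by rw [mul_assoc _ _ (∑ i, w i ^ 2)]; gcongr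

lemma sum_sq_sum_mul_eq_sum_sq {N : ℕ} {ξ : Fin N → Fin N → ℝ}
    (horth : ∀ n n', ∑ p, ξ n p * ξ n' p = if n = n' then (1 : ℝ) else 0) (v : Fin N → ℝ) :
    ∑ n, (∑ p, v p * ξ n p) ^ 2 = ∑ p, v p ^ 2 := by
  have hQ : of ξ * (of ξ)ᵀ = 1 := by
    ext n n'
    simpa [mul_apply, one_apply] using horth n n'
  have := congrArg (fun B => v ⬝ᵥ (B *ᵥ v)) (mul_eq_one_comm.mp hQ)
  simp only [one_mulVec] at this
  rw [← mulVec_mulVec, dotProduct_mulVec, vecMul_transpose] at this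
  simpa [dotProduct, mulVec, sq, mul_comm] using this

section POD

variable {E : Type*} [NormedAddCommGroup E] [InnerProductSpace ℝ E] {N : ℕ} {u : Fin N → E}
  {τ : Fin N → ℝ} {ξ : Fin N → Fin N → ℝ} {Φ : Fin N → E}

lemma inner_podMode
    (heig : ∀ n p, τ n * ξ n p = (1 / (N : ℝ)) * ∑ q, ⟪u p, u q⟫ * ξ n q)
    (hΦ : ∀ n, Φ n = (√(N * τ n))⁻¹ • ∑ p, ξ n p • u p) (n p : Fin N) :
    ⟪u p, Φ n⟫ = √(N * τ n) * ξ n p := by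
  have hN : (N : ℝ) ≠ 0 := by exact_mod_cast n.pos.ne'
  have hgram : ∑ q, ⟪u p, u q⟫ * ξ n q = N * τ n * ξ n p := by
    rw [mul_assoc, heig, ← mul_assoc, mul_one_div_cancel hN, one_mul]
  simp only [hΦ, inner_smul_right, inner_sum, mul_comm (ξ n _), hgram]
  rw [← mul_assoc, ← div_eq_inv_mul, Real.div_sqrt]

lemma inner_sum_smul_podMode
    (heig : ∀ n p, τ n * ξ n p = (1 / (N : ℝ)) * ∑ q, ⟪u p, u q⟫ * ξ n q)
    (hΦ : ∀ n, Φ n = (√(N * τ n))⁻¹ • ∑ p, ξ n p • u p) (w : Fin N → ℝ) (n : Fin N) :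
    ⟪∑ p, w p • u p, Φ n⟫ = √(N * τ n) * ∑ p, w p * ξ n p := by
  simp only [sum_inner, inner_smul_left, inner_podMode heig hΦ, mul_sum, conj_trivial]
  exact sum_congr rfl fun p _ => by ring

lemma sum_sq_inner_podMode (hτ : ∀ n, 0 ≤ τ n)
    (heig : ∀ n p, τ n * ξ n p = (1 / (N : ℝ)) * ∑ q, ⟪u p, u q⟫ * ξ n q)
    (horth : ∀ n n', ∑ p, ξ n p * ξ n' p = if n = n' then (1 : ℝ) else 0)
    (hΦ : ∀ n, Φ n = (√(N * τ n))⁻¹ • ∑ p, ξ n p • u p) (n : Fin N) :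
    ∑ p, ⟪u p, Φ n⟫ ^ 2 = N * τ n := by
  have hNτ : 0 ≤ (N : ℝ) * τ n := mul_nonneg (Nat.cast_nonneg _) (hτ n)
  calc ∑ p, ⟪u p, Φ n⟫ ^ 2 = ∑ p, N * τ n * (ξ n p * ξ n p) :=
        sum_congr rfl fun p _ => by rw [inner_podMode heig hΦ, mul_pow, sq_sqrt hNτ]; ring
    _ = N * τ n := by rw [← mul_sum, horth, if_pos rfl, mul_one]

lemma podRatio_eq_setIntegral_sum_sq {X : Type*} [MeasurableSpace X] {ν : Measure X} {P : Set X}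
    (hP : MeasurableSet P) {g : X → E} {w : X → Fin N → ℝ} (hτ : ∀ n, 0 < τ n)
    (heig : ∀ n p, τ n * ξ n p = (1 / (N : ℝ)) * ∑ q, ⟪u p, u q⟫ * ξ n q)
    (horth : ∀ n n', ∑ p, ξ n p * ξ n' p = if n = n' then (1 : ℝ) else 0)
    (hΦ : ∀ n, Φ n = (√(N * τ n))⁻¹ • ∑ p, ξ n p • u p)
    (hexact : ∀ x ∈ P, g x = ∑ p, w x p • u p)
    (hint : ∀ n, IntegrableOn (fun x => (∑ p, w x p * ξ n p) ^ 2) P ν) :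
    (1 / (N : ℝ)) * ∑ n, (∫ x in P, ⟪g x, Φ n⟫ ^ 2 ∂ν) /
        (((ν P).toReal / N) * ∑ p, ⟪u p, Φ n⟫ ^ 2) =
      (1 / (ν P).toReal) * ∫ x in P, ∑ p, w x p ^ 2 ∂ν := by
  have hterm : ∀ n, (1 / (N : ℝ)) * ((∫ x in P, ⟪g x, Φ n⟫ ^ 2 ∂ν) /
      (((ν P).toReal / N) * ∑ p, ⟪u p, Φ n⟫ ^ 2)) =
        (1 / (ν P).toReal) * ∫ x in P, (∑ p, w x p * ξ n p) ^ 2 ∂ν := by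
    intro n
    have hN : (N : ℝ) ≠ 0 := by exact_mod_cast n.pos.ne'
    have hNτ : 0 < (N : ℝ) * τ n := mul_pos (by exact_mod_cast n.pos) (hτ n)
    have hnum : ∫ x in P, ⟪g x, Φ n⟫ ^ 2 ∂ν =
        N * τ n * ∫ x in P, (∑ p, w x p * ξ n p) ^ 2 ∂ν := by
      rw [← integral_const_mul]
      refine setIntegral_congr_fun hP fun x hx => ?_
      rw [hexact x hx, inner_sum_smul_podMode heig hΦ, mul_pow, sq_sqrt hNτ.le]
    rw [hnum, sum_sq_inner_podMode (fun n => (hτ n).le) heig horth hΦ,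
      mul_comm _ ((N : ℝ) * τ n), mul_div_mul_left _ _ hNτ.ne', div_div_eq_mul_div]
    field_simp
  rw [mul_sum, sum_congr rfl fun n _ => hterm n, ← mul_sum,
    ← integral_finsetSum _ fun n _ => hint n]
  simp only [sum_sq_sum_mul_eq_sum_sq horth]

end POD

lemma one_div_mul_setIntegral_le_of_le {X : Type*} [MeasurableSpace X] {ν : Measure X}
    {P : Set X} (hP : MeasurableSet P) (hPfin : ν P ≠ ⊤) {f h : X → ℝ} {a b : ℝ} (ha : 0 ≤ a)
    (hf : IntegrableOn f P ν) (hh : IntegrableOn h P ν) (hfh : ∀ x ∈ P, f x ≤ a + b * h x) :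
    (1 / (ν P).toReal) * ∫ x in P, f x ∂ν ≤
      a + b * ((1 / (ν P).toReal) * ∫ x in P, h x ∂ν) := by
  have hint : ∫ x in P, f x ∂ν ≤ a * (ν P).toReal + b * ∫ x in P, h x ∂ν := by
    calc ∫ x in P, f x ∂ν ≤ ∫ x in P, (a + b * h x) ∂ν :=
          setIntegral_mono_on hf ((integrableOn_const hPfin).add (hh.const_mul b)) hP hfh
      _ = _ := by
        rw [integral_add (integrableOn_const hPfin (C := a)) (hh.const_mul b), setIntegral_const,
          integral_const_mul, smul_eq_mul, measureReal_def, mul_comm]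
  have hratio : (1 / (ν P).toReal) * (ν P).toReal ≤ 1 := by
    rw [one_div_mul_eq_div]; exact div_self_le_one _
  calc (1 / (ν P).toReal) * ∫ x in P, f x ∂ν
      ≤ (1 / (ν P).toReal) * (a * (ν P).toReal + b * ∫ x in P, h x ∂ν) := by gcongr
    _ = a * ((1 / (ν P).toReal) * (ν P).toReal) +
          b * ((1 / (ν P).toReal) * ∫ x in P, h x ∂ν) := by ring
    _ ≤ _ := by gcongr; exact mul_le_of_le_one_right ha hratio

theorem logdet_approximation_error_bound_general
    (r N q : ℕ)
    (K : Set (EuclideanSpace ℝ (Fin q)))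
    (P : Set (EuclideanSpace ℝ (Fin r))) (hP : IsCompact P)
    (g : EuclideanSpace ℝ (Fin r) → Lp ℝ 2 (volume.restrict K))
    (μs : Fin N → EuclideanSpace ℝ (Fin r)) (hμs : ∀ n, μs n ∈ P)
    (lam : EuclideanSpace ℝ (Fin r) → Fin N → ℝ)
    (hlam : ∀ n, ContinuousOn (fun μ => lam μ n) P)
    (τ : Fin N → ℝ) (ξ : Fin N → Fin N → ℝ)
    (hτpos : ∀ n, 0 < τ n)
    (heig : ∀ n p, τ n * ξ n p =
        (1 / (N : ℝ)) * ∑ q', ⟪g (μs p), g (μs q')⟫ * ξ n q')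
    (horth : ∀ n m, ∑ p, ξ n p * ξ m p = if n = m then (1 : ℝ) else 0)
    (Φ : Fin N → Lp ℝ 2 (volume.restrict K))
    (hΦ : ∀ n, Φ n = (Real.sqrt (N * τ n))⁻¹ • ∑ p, ξ n p • g (μs p))
    (Z : ℝ)
    (hZ : Z = (1 / (N : ℝ)) * ∑ n,
        (∫ μ in P, ⟪g μ, Φ n⟫ ^ 2) /
          (((volume P).toReal / N) * ∑ p, ⟪g (μs p), Φ n⟫ ^ 2))
    -- the parametrized symmetric positive definite matrices
    (d Nhat : ℕ) (α : Fin d → EuclideanSpace ℝ (Fin r) → ℝ)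
    (hα : ∀ l, ContinuousOn (α l) P)
    (A : Fin d → Matrix (Fin Nhat) (Fin Nhat) ℝ)
    (hSPD : ∀ μ ∈ P, (∑ l, α l μ • A l).PosDef)
    (ρ₀ ρM : ℝ) (hρ₀ : 0 < ρ₀) (hρ₀M : ρ₀ ≤ ρM)
    (heigbound : ∀ μ ∈ P, ∀ rr : ℝ,
        Module.End.HasEigenvalue (Matrix.toLin' (∑ l, α l μ • A l)) rr →
          ρ₀ ≤ rr ∧ rr < ρM)
    (m : ℕ) (hm : 1 ≤ m)
    (Xm : Lp ℝ 2 (volume.restrict K) →L[ℝ] ℝ)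
    (hXm : ∀ μ ∈ P, Xm (g μ) =
        -∑ k ∈ Finset.Icc 1 (m - 1),
            ((1 - ρM⁻¹ • ∑ l, α l μ • A l) ^ k).trace / (k : ℝ))
    -- exact interpolation of g on P, with coefficients summing to one
    (hexact : ∀ μ ∈ P, g μ = ∑ n, lam μ n • g (μs n))
    (hpartition : ∀ μ ∈ P, ∑ n, lam μ n = 1) :
    (1 / (volume P).toReal) *
        ∫ μ in P,
          |(∑ n, lam μ n * Real.log (∑ l, α l (μs n) • A l).det) -
            Real.log (∑ l, α l μ • A l).det| ^ 2 ≤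
      3 * ((Nhat : ℝ) ^ 2 / (m : ℝ) ^ 2) * (ρM / ρ₀) ^ 2 *
        (1 - ρ₀ / ρM) ^ (2 * m) * (1 + 2 * (N : ℝ) ^ 2 * Z) := by
  set c : ℝ := Nhat * (ρM / ρ₀ * (1 - ρ₀ / ρM) ^ m / m) with hc
  have hR : ∀ μ ∈ P, |(∑ l, α l μ • A l).logDetRemainder ρM m| ≤ c := fun μ hμ => by
    simpa using (hSPD μ hμ).isHermitian.abs_logDetRemainder_le hρ₀ hρ₀M (fun r hr =>
      heigbound μ hμ r (by rwa [Module.End.hasEigenvalue_iff_mem_spectrum, spectrum_toLin'])) hm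
  have hlogdet : ∀ μ ∈ P, log (∑ l, α l μ • A l).det =
      Nhat * log ρM + Xm (g μ) + (∑ l, α l μ • A l).logDetRemainder ρM m := fun μ hμ => by
    rw [logDetRemainder, hXm μ hμ, Fintype.card_fin]; ring
  have hpt : ∀ μ ∈ P, |(∑ n, lam μ n * log (∑ l, α l (μs n) • A l).det) -
      log (∑ l, α l μ • A l).det| ^ 2 ≤ 2 * c ^ 2 + 2 * c ^ 2 * N * ∑ n, lam μ n ^ 2 :=
    fun μ hμ => by
      rw [sum_mul_sub_eq_of_eq_affine_add Xm.toLinearMap _ (hexact μ hμ) (hpartition μ hμ)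
        (fun n => hlogdet _ (hμs n)) (hlogdet μ hμ)]
      simpa using sq_abs_sum_mul_sub_le (w := lam μ) (fun n => hR _ (hμs n)) (hR μ hμ)
  have hZ' : Z = (1 / (volume P).toReal) * ∫ μ in P, ∑ n, lam μ n ^ 2 :=
    hZ.trans (podRatio_eq_setIntegral_sum_sq hP.measurableSet hτpos heig horth hΦ hexact
      fun n => ContinuousOn.integrableOn_compact hP (by fun_prop))
  have hZ0 : 0 ≤ Z := hZ' ▸ mul_nonneg (by positivity)
    (setIntegral_nonneg hP.measurableSet fun μ _ => by positivity)
  have hlogdetcont : ContinuousOn (fun μ => log (∑ l, α l μ • A l).det) P :=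
    ContinuousOn.log (by fun_prop) fun μ hμ => (hSPD μ hμ).det_pos.ne'
  calc _ ≤ 2 * c ^ 2 + 2 * c ^ 2 * N * Z := by
        rw [hZ']
        exact one_div_mul_setIntegral_le_of_le hP.measurableSet hP.measure_lt_top.ne
          (by positivity) (ContinuousOn.integrableOn_compact hP (by fun_prop))
          (ContinuousOn.integrableOn_compact hP (by fun_prop)) hpt
    _ ≤ 3 * c ^ 2 * (1 + 2 * N ^ 2 * Z) := by
        have hNsq : (N : ℝ) ≤ N ^ 2 := by exact_mod_cast Nat.le_self_pow two_ne_zero N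
        have hc2Z : 0 ≤ c ^ 2 * Z := mul_nonneg (sq_nonneg c) hZ0
        nlinarith [mul_le_mul_of_nonneg_left hNsq hc2Z, mul_nonneg (sq_nonneg (N : ℝ)) hc2Z,
          sq_nonneg c]
    _ = _ := by rw [hc]; ring

/-- (Corollary, log-determinant case.) In the approximation setting with
`V = ℝ` and `L_μ = log det A_μ − N̂ log ρ_M`, where `A_μ = ∑ l, α l (μ) • A l` is symmetric
positive definite on `P`, every eigenvalue `r` of every `A_μ` satisfies `ρ₀ ≤ r < ρ_M` with
`0 < ρ₀ ≤ ρ_M`, `m ≥ 1`, `X_m` is the continuous linear map realizing the truncated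
log-det series, the interpolation is exact (`g_μ = ∑ n, λ n (μ) • g (μ n)` on `P`) and
`∑ n, λ n (μ) = 1` on `P`, one has
`(1/|P|) ∫_P |∑ n, λ n (μ) log det A_{μ n} − log det A_μ|² dμ
  ≤ 3 (N̂²/m²) (ρ_M/ρ₀)² (1 − ρ₀/ρ_M)^{2m} (1 + 2 N² Z_N)`. -/
theorem logdet_approximation_error_bound
    (r N q : ℕ) (hN : 0 < N)
    (K : Set (EuclideanSpace ℝ (Fin q)))
    (hKb : IsBounded K) (hKm : MeasurableSet K)
    (P : Set (EuclideanSpace ℝ (Fin r))) (hP : IsCompact P)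
    (hPpos : 0 < (volume P).toReal)
    (g : EuclideanSpace ℝ (Fin r) → Lp ℝ 2 (volume.restrict K))
    (hg : ContinuousOn g P)
    (μs : Fin N → EuclideanSpace ℝ (Fin r)) (hμs : ∀ n, μs n ∈ P)
    (hli : LinearIndependent ℝ (fun n => g (μs n)))
    (lam : EuclideanSpace ℝ (Fin r) → Fin N → ℝ)
    (hlam : ∀ n, ContinuousOn (fun μ => lam μ n) P)
    (τ : Fin N → ℝ) (ξ : Fin N → Fin N → ℝ)
    (hτmono : ∀ i j : Fin N, i ≤ j → τ j ≤ τ i)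
    (hτpos : ∀ n, 0 < τ n)
    (heig : ∀ n p, τ n * ξ n p =
        (1 / (N : ℝ)) * ∑ q', ⟪g (μs p), g (μs q')⟫ * ξ n q')
    (horth : ∀ n m, ∑ p, ξ n p * ξ m p = if n = m then (1 : ℝ) else 0)
    (Φ : Fin N → Lp ℝ 2 (volume.restrict K))
    (hΦ : ∀ n, Φ n = (Real.sqrt (N * τ n))⁻¹ • ∑ p, ξ n p • g (μs p))
    (Z : ℝ)
    (hZ : Z = (1 / (N : ℝ)) * ∑ n,
        (∫ μ in P, ⟪g μ, Φ n⟫ ^ 2) /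
          (((volume P).toReal / N) * ∑ p, ⟪g (μs p), Φ n⟫ ^ 2))
    -- the parametrized symmetric positive definite matrices
    (d Nhat : ℕ) (α : Fin d → EuclideanSpace ℝ (Fin r) → ℝ)
    (hα : ∀ l, ContinuousOn (α l) P)
    (A : Fin d → Matrix (Fin Nhat) (Fin Nhat) ℝ)
    (hSPD : ∀ μ ∈ P, (∑ l, α l μ • A l).PosDef)
    (ρ₀ ρM : ℝ) (hρ₀ : 0 < ρ₀) (hρ₀M : ρ₀ ≤ ρM)
    (heigbound : ∀ μ ∈ P, ∀ rr : ℝ,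
        Module.End.HasEigenvalue (Matrix.toLin' (∑ l, α l μ • A l)) rr →
          ρ₀ ≤ rr ∧ rr < ρM)
    (m : ℕ) (hm : 1 ≤ m)
    (Xm : Lp ℝ 2 (volume.restrict K) →L[ℝ] ℝ)
    (hXm : ∀ μ ∈ P, Xm (g μ) =
        -∑ k ∈ Finset.Icc 1 (m - 1),
            ((1 - ρM⁻¹ • ∑ l, α l μ • A l) ^ k).trace / (k : ℝ))
    -- exact interpolation of g on P, with coefficients summing to one
    (hexact : ∀ μ ∈ P, g μ = ∑ n, lam μ n • g (μs n))
    (hpartition : ∀ μ ∈ P, ∑ n, lam μ n = 1) :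
    (1 / (volume P).toReal) *
        ∫ μ in P,
          |(∑ n, lam μ n * Real.log (∑ l, α l (μs n) • A l).det) -
            Real.log (∑ l, α l μ • A l).det| ^ 2 ≤
      3 * ((Nhat : ℝ) ^ 2 / (m : ℝ) ^ 2) * (ρM / ρ₀) ^ 2 *
        (1 - ρ₀ / ρM) ^ (2 * m) * (1 + 2 * (N : ℝ) ^ 2 * Z) :=
  logdet_approximation_error_bound_general r N q K P hP g μs hμs lam hlam τ ξ hτpos heig horth Φ hΦ
    Z hZ d Nhat α hα A hSPD ρ₀ ρM hρ₀ hρ₀M heigbound m hm Xm hXm hexact hpartition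
end
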